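/- arXiv:2009.05814 — 3 statements merged into one kernel-verified Lean document; each statement's English description precedes it below -/
import Mathlib

section
/- Let $S \geq 2$, $A \in \mathbb{R}^{m\times n}$, $W$ symmetric positive semidefinite with square root $W^{1/2}$, $f \in \mathbb{R}^m$, $\mu > 0$, and define $G(u_1,\dots,u_S) = \sum_{s=1}^S \|W^{1/2}Au_s - W^{1/2}f\|^2 + \mu^2 \sum_{1 \le s < t \le S} \|u_s - u_t\|^2$. Then: (i) if $u^*$ minimizes $g(u)=\|W^{1/2}Au - W^{1/2}f\|^2$ then $(u^*,\dots,u^*)$ minimizes $G$; (ii) any minimizer $(u_1^*,\dots,u_S^*)$ of $G$ satisfies $u_1^* = \cdots = u_S^*$, and $u_1^*$ minimizes $g$. -/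
open Matrix

/-!
A tuple `u` minimising `G` is no worse than each of the constant tuples `(u s, …, u s)`, whose
value is `S g(u s)`. Averaging these `S` inequalities gives `G u ≤ ∑ s, g (u s)`, so the
nonnegative coupling penalty of `u` vanishes, which forces `u` to be constant; then
`G u = S g(u s)`, and comparing with the constant tuples shows that `u s` minimises `g`.
-/

section SplitObjective

variable {ι X : Type*} [Fintype ι]

def splitObjective (g : X → ℝ) (c : ℝ) (P : (ι → X) → ℝ) (u : ι → X) : ℝ :=
  (∑ s, g (u s)) + c * P u

variable {g : X → ℝ} {c : ℝ} {P : (ι → X) → ℝ}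

theorem splitObjective_const (hP : ∀ u, P u = 0 ↔ ∀ s t, u s = u t) (v : X) :
    splitObjective g c P (fun _ => v) = Fintype.card ι * g v := by
  have h0 : P (fun _ => v) = 0 := (hP _).mpr fun _ _ => rfl
  simp [splitObjective, h0]

theorem sum_le_splitObjective (hc : 0 ≤ c) (hP : ∀ u, 0 ≤ P u) (u : ι → X) :
    ∑ s, g (u s) ≤ splitObjective g c P u :=
  le_add_of_nonneg_right (mul_nonneg hc (hP u))

theorem splitObjective_const_le_of_le (hc : 0 ≤ c) (hP_nonneg : ∀ u, 0 ≤ P u)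
    (hP : ∀ u, P u = 0 ↔ ∀ s t, u s = u t) {v : X} (hv : ∀ w, g v ≤ g w) (u : ι → X) :
    splitObjective g c P (fun _ => v) ≤ splitObjective g c P u := by
  calc splitObjective g c P (fun _ => v) = ∑ _s : ι, g v := by
        simp [splitObjective_const hP]
    _ ≤ ∑ s, g (u s) := Finset.sum_le_sum fun s _ => hv (u s)
    _ ≤ splitObjective g c P u := sum_le_splitObjective hc hP_nonneg u

theorem penalty_eq_zero_of_le_splitObjective [Nonempty ι] (hc : 0 < c)
    (hP_nonneg : ∀ u, 0 ≤ P u) (hP : ∀ u, P u = 0 ↔ ∀ s t, u s = u t) {u : ι → X}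
    (hu : ∀ w, splitObjective g c P u ≤ splitObjective g c P w) : P u = 0 := by
  have hcard : (0 : ℝ) < Fintype.card ι := by exact_mod_cast Fintype.card_pos
  have h_avg : Fintype.card ι * splitObjective g c P u ≤ Fintype.card ι * ∑ s, g (u s) :=
    calc Fintype.card ι * splitObjective g c P u = ∑ _s : ι, splitObjective g c P u := by
          simp
      _ ≤ ∑ s, Fintype.card ι * g (u s) := Finset.sum_le_sum fun s _ => by
          rw [← splitObjective_const hP]
          exact hu _
      _ = Fintype.card ι * ∑ s, g (u s) := (Finset.mul_sum ..).symm
  have h_pen : c * P u ≤ 0 := by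
    have := le_of_mul_le_mul_left h_avg hcard
    rw [splitObjective] at this
    linarith
  exact le_antisymm (nonpos_of_mul_nonpos_right h_pen hc) (hP_nonneg u)

theorem const_and_le_of_le_splitObjective [Nonempty ι] (hc : 0 < c)
    (hP_nonneg : ∀ u, 0 ≤ P u) (hP : ∀ u, P u = 0 ↔ ∀ s t, u s = u t) {u : ι → X}
    (hu : ∀ w, splitObjective g c P u ≤ splitObjective g c P w) :
    (∀ s t, u s = u t) ∧ ∀ s w, g (u s) ≤ g w := by
  have h_const := (hP u).mp (penalty_eq_zero_of_le_splitObjective hc hP_nonneg hP hu)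
  refine ⟨h_const, fun s w => ?_⟩
  have hu_eq : u = fun _ => u s := funext fun t => h_const t s
  have := hu fun _ => w
  rw [hu_eq, splitObjective_const hP, splitObjective_const hP] at this
  exact le_of_mul_le_mul_left this (by exact_mod_cast Fintype.card_pos)

end SplitObjective

section PairwiseSqDist

variable {ι κ : Type*} [LinearOrder ι] [Fintype κ]

theorem sum_sq_sub_eq_zero_iff {x y : κ → ℝ} : ∑ j, (x j - y j) ^ 2 = 0 ↔ x = y := by
  rw [Finset.sum_eq_zero_iff_of_nonneg fun j _ => sq_nonneg _, funext_iff]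
  simp [sub_eq_zero]

theorem pairwiseSqDist_term_nonneg (u : ι → κ → ℝ) (s t : ι) :
    0 ≤ if s < t then ∑ j, (u s j - u t j) ^ 2 else 0 := by
  split_ifs
  exacts [Finset.sum_nonneg fun j _ => sq_nonneg _, le_rfl]

variable [Fintype ι]

def pairwiseSqDist (u : ι → κ → ℝ) : ℝ :=
  ∑ s, ∑ t, if s < t then ∑ j, (u s j - u t j) ^ 2 else 0

theorem pairwiseSqDist_nonneg (u : ι → κ → ℝ) : 0 ≤ pairwiseSqDist u :=
  Finset.sum_nonneg fun s _ => Finset.sum_nonneg fun t _ => pairwiseSqDist_term_nonneg u s t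

theorem pairwiseSqDist_eq_zero_iff (u : ι → κ → ℝ) :
    pairwiseSqDist u = 0 ↔ ∀ s t, u s = u t := by
  have h_lt : pairwiseSqDist u = 0 ↔ ∀ s t, s < t → u s = u t := by
    simp only [pairwiseSqDist,
      Finset.sum_eq_zero_iff_of_nonneg fun s _ =>
        Finset.sum_nonneg fun t _ => pairwiseSqDist_term_nonneg u s t,
      Finset.sum_eq_zero_iff_of_nonneg fun t _ => pairwiseSqDist_term_nonneg u _ t,
      Finset.mem_univ, true_implies, ite_eq_right_iff, sum_sq_sub_eq_zero_iff]
  rw [h_lt]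
  refine ⟨fun h s t => ?_, fun h s t _ => h s t⟩
  rcases lt_trichotomy s t with hst | rfl | hts
  exacts [h s t hst, rfl, (h t s hts).symm]

end PairwiseSqDist

theorem split_pwls_S_blocks (S m n : ℕ) (hS : 2 ≤ S)
    (A : Matrix (Fin m) (Fin n) ℝ) (B : Matrix (Fin m) (Fin m) ℝ)
    (f : Fin m → ℝ) (μ : ℝ) (hμ : 0 < μ) :
    let g : (Fin n → ℝ) → ℝ := fun u =>
      ∑ i, (B.mulVec (A.mulVec u) i - B.mulVec f i) ^ 2
    let G : (Fin S → Fin n → ℝ) → ℝ := fun u =>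
      (∑ s, g (u s)) +
        μ ^ 2 * ∑ s, ∑ t, if s < t then ∑ j, (u s j - u t j) ^ 2 else 0
    (∀ u' : Fin n → ℝ, (∀ u, g u' ≤ g u) →
        ∀ u : Fin S → Fin n → ℝ, G (fun _ => u') ≤ G u) ∧
    (∀ u' : Fin S → Fin n → ℝ, (∀ u, G u' ≤ G u) →
        (∀ s t : Fin S, u' s = u' t) ∧ ∀ u, g (u' ⟨0, by omega⟩) ≤ g u) := by
  intro g G
  have : Nonempty (Fin S) := ⟨⟨0, by omega⟩⟩
  have hG : G = splitObjective g (μ ^ 2) pairwiseSqDist := rfl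
  rw [hG]
  exact ⟨fun v hv => splitObjective_const_le_of_le (sq_nonneg μ) pairwiseSqDist_nonneg
      pairwiseSqDist_eq_zero_iff hv,
    fun u hu => (const_and_le_of_le_splitObjective (pow_pos hμ 2) pairwiseSqDist_nonneg
      pairwiseSqDist_eq_zero_iff hu).imp_right fun h => h _⟩
end

section
/- For the univariate Potts problem: let $g \in \mathbb{R}^n$, $\gamma > 0$, and let $u^*$ be any minimizer of $P(u) = \|u - g\|^2 + \gamma\,J(u)$ over $u \in \mathbb{R}^n$, where $J(u) = \#\{i \in \{1,\dots,n-1\} : u_i \neq u_{i+1}\}$. Then the jump set of $u^*$ is contained in the jump set of $g$, i.e., $u^*_i \neq u^*_{i+1}$ implies $g_i \neq g_{i+1}$. -/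
/-- Number of jumps of a discrete signal of length `n+1`. -/
noncomputable def jumpCount (n : ℕ) (u : Fin (n + 1) → ℝ) : ℕ :=
  (Finset.univ.filter fun i : Fin n => u i.castSucc ≠ u i.succ).card

/-!
Suppose `u'` jumps at `i` while `g i = g (i + 1) = c`, and write `a = u' i`, `b = u' (i + 1)`.
Giving one endpoint of a jump the value of the other never increases the number of jumps, so
minimality yields `(b - c)² ≤ (a - c)²`. Shifting the tail `j ≥ i + 1` by `t` does not increase
it either, hence the residuals `u' - g` sum to zero over that tail; shifting the tail and moving
`u' i` to `b + t` then gives `(a - c)² ≤ (b + t - c)² + m t²` for all `t`, with `m` the length of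
the tail. Together these force `b = c`, and then `a = c`, contradicting `a ≠ b`.
-/

open Finset

lemma eq_zero_of_forall_nonneg_two_mul_add_mul_sq {a b : ℝ}
    (h : ∀ t, 0 ≤ 2 * b * t + a * t ^ 2) : b = 0 := by
  have hs : 0 < |a| + 1 := by positivity
  have key : (2 * b * (-b / (|a| + 1)) + a * (-b / (|a| + 1)) ^ 2) * (|a| + 1) ^ 2 =
      b ^ 2 * (a - 2 * |a| - 2) := by
    field_simp
    ring
  have hneg : 0 ≤ b ^ 2 * (a - 2 * |a| - 2) := key ▸ mul_nonneg (h _) (sq_nonneg _)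
  nlinarith [le_abs_self a, sq_nonneg b]

section

variable {ι : Type*} [Fintype ι] [DecidableEq ι]

lemma sum_sq_sub_update (u g : ι → ℝ) (p : ι) (x : ℝ) :
    ∑ j, (Function.update u p x j - g j) ^ 2 =
      ∑ j, (u j - g j) ^ 2 + ((x - g p) ^ 2 - (u p - g p) ^ 2) := by
  have hoff : ∑ j ∈ {p}ᶜ, (Function.update u p x j - g j) ^ 2 = ∑ j ∈ {p}ᶜ, (u j - g j) ^ 2 :=
    sum_congr rfl fun j hj => by rw [Function.update_of_ne (by simpa using hj)]
  rw [Fintype.sum_eq_add_sum_compl p, Fintype.sum_eq_add_sum_compl p, hoff,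
    Function.update_self]
  ring

lemma sum_sq_sub_add_indicator (u g : ι → ℝ) (s : Finset ι) (t : ℝ) :
    ∑ j, ((if j ∈ s then u j + t else u j) - g j) ^ 2 =
      ∑ j, (u j - g j) ^ 2 + 2 * t * ∑ j ∈ s, (u j - g j) + #s * t ^ 2 := by
  have hterm : ∀ j, ((if j ∈ s then u j + t else u j) - g j) ^ 2 =
      (u j - g j) ^ 2 + if j ∈ s then 2 * t * (u j - g j) + t ^ 2 else 0 := by
    intro j
    split_ifs <;> ring
  simp only [hterm, sum_add_distrib, sum_ite_mem, univ_inter, mul_sum, sum_const, nsmul_eq_mul]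
  ring

end

section

variable {n : ℕ}

lemma jumpCount_le_of_eq_off_endpoint {u v : Fin (n + 1) → ℝ} {i : Fin n} {p : Fin (n + 1)}
    (hp : p = i.castSucc ∨ p = i.succ) (hv : ∀ j, j ≠ p → v j = u j)
    (hvi : v i.castSucc = v i.succ) : jumpCount n v ≤ jumpCount n u := by
  have hi : i.castSucc ≠ i.succ := Fin.castSucc_lt_succ.ne
  by_cases hui : u i.castSucc = u i.succ
  · suffices v = u by rw [this]
    funext j
    by_cases hj : j = p
    · subst hj
      rcases hp with rfl | rfl
      · rw [hvi, hv _ hi.symm, hui]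
      · rw [← hvi, hv _ hi, hui]
    · exact hv j hj
  -- edges next to `p` other than `i` are charged to the jump of `u` at `i`
  refine card_le_card_of_injOn (fun k => if k.castSucc = p ∨ k.succ = p then i else k) ?_ ?_
  · intro k hk
    simp only [coe_filter, mem_univ, true_and, Set.mem_ofPred_eq] at hk ⊢
    split_ifs with hkp
    · exact hui
    · rw [not_or] at hkp
      rwa [hv _ hkp.1, hv _ hkp.2] at hk
  · intro k₁ hk₁ k₂ hk₂ heq
    simp only [coe_filter, mem_univ, true_and, Set.mem_ofPred_eq] at hk₁ hk₂
    have hk₁i : k₁ ≠ i := by rintro rfl; exact hk₁ hvi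
    have hk₂i : k₂ ≠ i := by rintro rfl; exact hk₂ hvi
    simp only [Fin.ext_iff, Fin.val_castSucc, Fin.val_succ, ne_eq] at hp heq hk₁i hk₂i ⊢
    split_ifs at heq <;> omega

lemma jumpCount_shift_tail_le {u : Fin (n + 1) → ℝ} {i : Fin n}
    (hi : u i.castSucc ≠ u i.succ) (t : ℝ) :
    jumpCount n (fun j => if j ∈ Ici i.succ then u j + t else u j) ≤ jumpCount n u := by
  refine card_le_card fun k hk => ?_
  simp only [mem_filter, mem_univ, true_and, mem_Ici] at hk ⊢
  by_cases hki : k = i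
  · exact hki ▸ hi
  have hside : i.succ ≤ k.castSucc ↔ i.succ ≤ k.succ := by
    simp only [Fin.le_def, Fin.val_castSucc, Fin.val_succ]
    have := Fin.val_ne_of_ne hki
    omega
  simp only [hside] at hk
  split_ifs at hk <;> simpa using hk

def IsPottsMinimizer (g : Fin (n + 1) → ℝ) (γ : ℝ) (u' : Fin (n + 1) → ℝ) : Prop :=
  ∀ u : Fin (n + 1) → ℝ,
    (∑ i, (u' i - g i) ^ 2) + γ * jumpCount n u' ≤ (∑ i, (u i - g i) ^ 2) + γ * jumpCount n u

namespace IsPottsMinimizer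

variable {g u' : Fin (n + 1) → ℝ} {γ : ℝ}

lemma sum_sq_le (hmin : IsPottsMinimizer g γ u') (hγ : 0 ≤ γ) {v : Fin (n + 1) → ℝ}
    (hv : jumpCount n v ≤ jumpCount n u') :
    ∑ j, (u' j - g j) ^ 2 ≤ ∑ j, (v j - g j) ^ 2 := by
  have hcost : γ * (jumpCount n v : ℝ) ≤ γ * jumpCount n u' := by gcongr
  linarith [hmin v]

lemma sum_Ici_sub_eq_zero (hmin : IsPottsMinimizer g γ u') (hγ : 0 ≤ γ) {i : Fin n}
    (hi : u' i.castSucc ≠ u' i.succ) : ∑ j ∈ Ici i.succ, (u' j - g j) = 0 := by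
  have h := fun t => hmin.sum_sq_le hγ (jumpCount_shift_tail_le hi t)
  simp only [sum_sq_sub_add_indicator] at h
  exact eq_zero_of_forall_nonneg_two_mul_add_mul_sq (a := #(Ici i.succ)) fun t => by
    linarith [h t]

lemma sq_sub_le_of_merge_right (hmin : IsPottsMinimizer g γ u') (hγ : 0 ≤ γ) {i : Fin n}
    (hi : u' i.castSucc ≠ u' i.succ) (t : ℝ) :
    (u' i.castSucc - g i.castSucc) ^ 2 ≤
      (u' i.succ + t - g i.castSucc) ^ 2 + #(Ici i.succ) * t ^ 2 := by
  set w := fun j => if j ∈ Ici i.succ then u' j + t else u' j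
  have hwi : w i.castSucc = u' i.castSucc := if_neg (by simp)
  have hwi' : w i.succ = u' i.succ + t := if_pos (by simp)
  have hJ : jumpCount n (Function.update w i.castSucc (w i.succ)) ≤ jumpCount n u' :=
    (jumpCount_le_of_eq_off_endpoint (.inl rfl) (fun j hj => Function.update_of_ne hj _ _)
      (by simp [Fin.castSucc_lt_succ.ne'])).trans (jumpCount_shift_tail_le hi t)
  have h := hmin.sum_sq_le hγ hJ
  rw [sum_sq_sub_update, sum_sq_sub_add_indicator, hmin.sum_Ici_sub_eq_zero hγ hi, hwi, hwi'] at h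
  linarith

lemma sq_sub_le_of_merge_left (hmin : IsPottsMinimizer g γ u') (hγ : 0 ≤ γ) (i : Fin n) :
    (u' i.succ - g i.succ) ^ 2 ≤ (u' i.castSucc - g i.succ) ^ 2 := by
  have hJ : jumpCount n (Function.update u' i.succ (u' i.castSucc)) ≤ jumpCount n u' :=
    jumpCount_le_of_eq_off_endpoint (.inr rfl) (fun j hj => Function.update_of_ne hj _ _)
      (by simp [Fin.castSucc_lt_succ.ne])
  have h := hmin.sum_sq_le hγ hJ
  rw [sum_sq_sub_update] at h
  linarith

end IsPottsMinimizer

end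

theorem potts_minimizer_jumpset_subset (n : ℕ) (g : Fin (n + 1) → ℝ) (γ : ℝ)
    (hγ : 0 < γ) (u' : Fin (n + 1) → ℝ)
    (hmin : ∀ u : Fin (n + 1) → ℝ,
      (∑ i, (u' i - g i) ^ 2) + γ * jumpCount n u' ≤
        (∑ i, (u i - g i) ^ 2) + γ * jumpCount n u) :
    ∀ i : Fin n, u' i.castSucc ≠ u' i.succ → g i.castSucc ≠ g i.succ := by
  intro i hi hg
  have hmin : IsPottsMinimizer g γ u' := hmin
  have hright := hmin.sq_sub_le_of_merge_right hγ.le hi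
  have hleft := hmin.sq_sub_le_of_merge_left hγ.le i
  rw [← hg] at hleft
  have hb : u' i.succ - g i.castSucc = 0 :=
    eq_zero_of_forall_nonneg_two_mul_add_mul_sq (a := #(Ici i.succ) + 1) fun t => by
      linarith [hright t]
  have ha : u' i.castSucc - g i.castSucc = 0 := by nlinarith [hright 0]
  exact hi (by linarith)
end

section
/- Vector-valued version of the Bellman recursion: for data $g_1,\dots,g_n \in \mathbb{R}^C$ and $\gamma > 0$, let $P_r$ be the minimal value of $u \mapsto \sum_{i=1}^r \|u_i - g_i\|^2 + \gamma\,\#\{i<r : u_i \neq u_{i+1}\}$ over $u \in (\mathbb{R}^C)^r$, with $P_0 = -\gamma$. Then $P_r = \min_{1\le l \le r}\big(P_{l-1} + \gamma + \sum_{i=l}^r \|g_i - \mu_{l:r}\|^2\big)$ where $\mu_{l:r} \in \mathbb{R}^C$ is the componentwise mean of $g_l,\dots,g_r$. -/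
/-- Minimal value of the vector-valued univariate Potts problem on the prefix
of length `r` of the data sequence `g : ℕ → ℝ^C`, with `P 0 = -γ`. -/
noncomputable def pottsValVec (C : ℕ) (γ : ℝ) (g : ℕ → Fin C → ℝ) : ℕ → ℝ
  | 0 => -γ
  | r + 1 => sInf { v : ℝ | ∃ u : ℕ → Fin C → ℝ, v =
      (∑ i ∈ Finset.range (r + 1), ∑ c, (u i c - g i c) ^ 2) +
        γ * ((Finset.range r).filter fun i => u i ≠ u (i + 1)).card }

/-!
Write the Potts cost of `u` on a prefix of length `r` as its squared error plus `γ` per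
segment, minus `γ`, so that the empty prefix costs `-γ` and the cost is additive when the
prefix is cut at any point. Cutting an optimal `u` at the start `k` of its last segment
bounds the cost from below by `P k + γ` plus the error of the best constant on `[k, r)`,
which is the mean; conversely, gluing any `u` on `[0, k)` to that mean on `[k, r)` opens
at most one new segment.
-/

open Finset

namespace Potts

section

variable {α : Type*} [DecidableEq α]

def segStarts (u : ℕ → α) (s : Finset ℕ) : Finset ℕ :=
  s.filter fun i => i = 0 ∨ u (i - 1) ≠ u i

lemma card_segStarts_range_succ (u : ℕ → α) (m : ℕ) :
    #(segStarts u (range (m + 1))) = #((range m).filter fun i => u i ≠ u (i + 1)) + 1 := by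
  simp only [segStarts, card_filter, sum_range_succ']
  simp

lemma eq_of_segStarts_Ico_subset {u : ℕ → α} {k r : ℕ} (h : segStarts u (Ico k r) ⊆ {k}) :
    ∀ i ∈ Ico k r, u i = u k := by
  intro i hi
  obtain ⟨hki, hir⟩ := mem_Ico.mp hi
  induction i, hki using Nat.le_induction with
  | base => rfl
  | succ i hki ih =>
    have hstart : i + 1 ∉ segStarts u (Ico k r) := fun hmem => by
      have := mem_singleton.mp (h hmem)
      omega
    simp only [segStarts, mem_filter, mem_Ico, not_and, not_or, not_not] at hstart
    rw [← ih (mem_Ico.mpr ⟨hki, by omega⟩) (by omega), ← (hstart ⟨by omega, hir⟩).2]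
    rfl

lemma segStarts_piecewise_Ico_subset (v : ℕ → α) (a : α) (k r : ℕ) :
    segStarts (fun i => if i < k then v i else a) (Ico k r) ⊆ {k} := by
  intro i hi
  simp only [segStarts, mem_filter, mem_Ico] at hi
  obtain ⟨⟨hki, -⟩, hstart⟩ := hi
  by_contra hik
  rw [mem_singleton] at hik
  simp [show ¬ i < k by omega, show ¬ i - 1 < k by omega, show i ≠ 0 by omega] at hstart

end

variable {ι : Type*} [Fintype ι]

def sqErr (g u : ℕ → ι → ℝ) (s : Finset ℕ) : ℝ :=
  ∑ i ∈ s, ∑ c, (u i c - g i c) ^ 2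

noncomputable def mean (g : ℕ → ι → ℝ) (s : Finset ℕ) : ι → ℝ :=
  fun c => (∑ j ∈ s, g j c) / #s

noncomputable def segErr (g : ℕ → ι → ℝ) (s : Finset ℕ) : ℝ :=
  sqErr g (fun _ => mean g s) s

lemma sqErr_nonneg (g u : ℕ → ι → ℝ) (s : Finset ℕ) : 0 ≤ sqErr g u s :=
  sum_nonneg fun _ _ => sum_nonneg fun _ _ => sq_nonneg _

lemma sum_sq_mean_sub_le {β : Type*} (b : β → ℝ) (s : Finset β) (a : ℝ) :
    ∑ i ∈ s, ((∑ j ∈ s, b j) / #s - b i) ^ 2 ≤ ∑ i ∈ s, (a - b i) ^ 2 := by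
  rcases s.eq_empty_or_nonempty with rfl | hs
  · simp
  set μ := (∑ j ∈ s, b j) / #s
  have hcard : (#s : ℝ) ≠ 0 := by exact_mod_cast hs.card_pos.ne'
  have hcentered : ∑ i ∈ s, (μ - b i) = 0 := by
    rw [sum_sub_distrib, sum_const, nsmul_eq_mul]
    simp only [μ, mul_div_cancel₀ _ hcard, sub_self]
  calc ∑ i ∈ s, (μ - b i) ^ 2
      ≤ ∑ i ∈ s, (μ - b i) ^ 2 + #s * (a - μ) ^ 2 + 2 * (a - μ) * ∑ i ∈ s, (μ - b i) := by
        rw [hcentered]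
        nlinarith [sq_nonneg (a - μ)]
    _ = ∑ i ∈ s, (a - b i) ^ 2 := by
        rw [mul_sum, ← nsmul_eq_mul, ← sum_const, ← sum_add_distrib, ← sum_add_distrib]
        exact sum_congr rfl fun _ _ => by ring

lemma segErr_le_sqErr_const (g : ℕ → ι → ℝ) (s : Finset ℕ) (w : ι → ℝ) :
    segErr g s ≤ sqErr g (fun _ => w) s := by
  unfold segErr sqErr
  rw [sum_comm, sum_comm (s := s)]
  exact sum_le_sum fun c _ => sum_sq_mean_sub_le (fun i => g i c) s (w c)

lemma segErr_Ico_sub_one (g : ℕ → ι → ℝ) {l r : ℕ} (hl : 1 ≤ l) (hlr : l ≤ r) :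
    segErr g (Ico (l - 1) r) = ∑ i ∈ Icc (l - 1) (r - 1), ∑ c,
      (g i c - (∑ j ∈ Icc (l - 1) (r - 1), g j c) / ((r - l + 1 : ℕ) : ℝ)) ^ 2 := by
  have hIco : Ico (l - 1) r = Icc (l - 1) (r - 1) := by
    rw [← Nat.sub_add_cancel (hl.trans hlr), Ico_add_one_right_eq_Icc, Nat.add_sub_cancel]
  have hcard : #(Ico (l - 1) r) = r - l + 1 := by
    rw [Nat.card_Ico]
    omega
  simp only [segErr, sqErr, mean, ← hIco, hcard, sub_sq_comm]

noncomputable def cost (γ : ℝ) (g u : ℕ → ι → ℝ) (r : ℕ) : ℝ :=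
  sqErr g u (range r) + γ * #(segStarts u (range r)) - γ

lemma neg_le_cost {γ : ℝ} (hγ : 0 ≤ γ) (g u : ℕ → ι → ℝ) (r : ℕ) : -γ ≤ cost γ g u r := by
  have := mul_nonneg hγ (Nat.cast_nonneg (α := ℝ) #(segStarts u (range r)))
  unfold cost
  linarith [sqErr_nonneg g u (range r)]

lemma cost_eq_add (γ : ℝ) (g u : ℕ → ι → ℝ) {k r : ℕ} (hkr : k ≤ r) :
    cost γ g u r = cost γ g u k + sqErr g u (Ico k r) + γ * #(segStarts u (Ico k r)) := by
  have hsplit : range r = range k ∪ Ico k r := by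
    rw [range_eq_Ico, range_eq_Ico, Ico_union_Ico_eq_Ico (Nat.zero_le k) hkr]
  have hdisj : Disjoint (range k) (Ico k r) := by
    rw [range_eq_Ico]
    exact Ico_disjoint_Ico_consecutive 0 k r
  simp only [cost, sqErr, segStarts, hsplit, sum_union hdisj, filter_union,
    card_union_of_disjoint (disjoint_filter_filter hdisj), Nat.cast_add]
  ring

lemma cost_congr (γ : ℝ) (g : ℕ → ι → ℝ) {u v : ℕ → ι → ℝ} {k : ℕ}
    (h : ∀ i < k, u i = v i) : cost γ g u k = cost γ g v k := by
  have hsq : sqErr g u (range k) = sqErr g v (range k) :=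
    sum_congr rfl fun i hi => by rw [h i (mem_range.mp hi)]
  have hstarts : segStarts u (range k) = segStarts v (range k) := by
    refine filter_congr fun i hi => ?_
    have hik := mem_range.mp hi
    rw [h i hik, h (i - 1) (by omega)]
  rw [cost, cost, hsq, hstarts]

end Potts

open Potts

lemma pottsValVec_eq_iInf (C : ℕ) (γ : ℝ) (g : ℕ → Fin C → ℝ) (r : ℕ) :
    pottsValVec C γ g r = ⨅ u, cost γ g u r := by
  cases r with
  | zero => simp [pottsValVec, cost, sqErr, segStarts]
  | succ m =>
    have hcost : ∀ u, cost γ g u (m + 1) = (∑ i ∈ range (m + 1), ∑ c, (u i c - g i c) ^ 2) +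
        γ * ((range m).filter fun i => u i ≠ u (i + 1)).card := fun u => by
      rw [cost, sqErr, card_segStarts_range_succ]
      push_cast
      ring
    simp only [pottsValVec, iInf, hcost]
    congr 1
    ext v
    exact exists_congr fun u => eq_comm

lemma pottsValVec_le_cost {C : ℕ} {γ : ℝ} (hγ : 0 ≤ γ) (g u : ℕ → Fin C → ℝ) (r : ℕ) :
    pottsValVec C γ g r ≤ cost γ g u r := by
  rw [pottsValVec_eq_iInf]
  exact ciInf_le ⟨-γ, Set.forall_mem_range.mpr fun v => neg_le_cost hγ g v r⟩ u

lemma pottsValVec_le_add_segErr {C : ℕ} {γ : ℝ} (hγ : 0 ≤ γ) (g : ℕ → Fin C → ℝ)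
    {k r : ℕ} (hkr : k < r) :
    pottsValVec C γ g r ≤ pottsValVec C γ g k + γ + segErr g (Ico k r) := by
  suffices h : ∀ v, pottsValVec C γ g r - γ - segErr g (Ico k r) ≤ cost γ g v k by
    have := le_ciInf h
    rw [← pottsValVec_eq_iInf] at this
    linarith
  intro v
  set u : ℕ → Fin C → ℝ := fun i => if i < k then v i else mean g (Ico k r)
  have hstarts : (#(segStarts u (Ico k r)) : ℝ) ≤ 1 := by
    exact_mod_cast (card_le_card (segStarts_piecewise_Ico_subset v _ k r)).trans
      (card_singleton k).le
  have hprefix : cost γ g u k = cost γ g v k := cost_congr γ g fun i hi => if_pos hi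
  have hsegment : sqErr g u (Ico k r) = segErr g (Ico k r) :=
    sum_congr rfl fun i hi => by simp [u, (mem_Ico.mp hi).1.not_gt]
  have := pottsValVec_le_cost hγ g u r
  rw [cost_eq_add γ g u hkr.le, hprefix, hsegment] at this
  linarith [mul_le_of_le_one_right hγ hstarts]

lemma exists_add_segErr_le_cost {C : ℕ} {γ : ℝ} (hγ : 0 ≤ γ) (g u : ℕ → Fin C → ℝ)
    {r : ℕ} (hr : 0 < r) :
    ∃ k < r, pottsValVec C γ g k + γ + segErr g (Ico k r) ≤ cost γ g u r := by
  have hne : (segStarts u (range r)).Nonempty := ⟨0, by simp [segStarts, hr]⟩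
  set k := (segStarts u (range r)).max' hne
  have hk : k ∈ segStarts u (range r) := max'_mem _ hne
  have hkr : k < r := mem_range.mp (mem_filter.mp hk).1
  have hlast : segStarts u (Ico k r) = {k} := by
    refine eq_singleton_iff_unique_mem.mpr ⟨?_, fun i hi => ?_⟩
    · exact mem_filter.mpr ⟨mem_Ico.mpr ⟨le_rfl, hkr⟩, (mem_filter.mp hk).2⟩
    · have hi' : i ∈ segStarts u (range r) :=
        filter_subset_filter _ (fun j hj => mem_range.mpr (mem_Ico.mp hj).2) hi
      exact le_antisymm (le_max' _ i hi') (mem_Ico.mp (mem_filter.mp hi).1).1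
  have hconst : sqErr g u (Ico k r) = sqErr g (fun _ => u k) (Ico k r) :=
    sum_congr rfl fun i hi => by
      rw [eq_of_segStarts_Ico_subset hlast.subset i hi]
  refine ⟨k, hkr, ?_⟩
  rw [cost_eq_add γ g u hkr.le, hlast, card_singleton, Nat.cast_one, mul_one, hconst]
  linarith [pottsValVec_le_cost hγ g u k, segErr_le_sqErr_const g (Ico k r) (u k)]

theorem potts_bellman_recursion_vec (C : ℕ) (γ : ℝ) (hγ : 0 < γ)
    (g : ℕ → Fin C → ℝ) (r : ℕ) (hr : 1 ≤ r) :
    pottsValVec C γ g r =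
      (Finset.Icc 1 r).inf' (Finset.nonempty_Icc.mpr hr) fun l =>
        pottsValVec C γ g (l - 1) + γ +
          ∑ i ∈ Finset.Icc (l - 1) (r - 1), ∑ c,
            (g i c - (∑ j ∈ Finset.Icc (l - 1) (r - 1), g j c) / ((r - l + 1 : ℕ) : ℝ)) ^ 2 := by
  have hsegment : ∀ l ∈ Icc 1 r,
      pottsValVec C γ g (l - 1) + γ +
          ∑ i ∈ Icc (l - 1) (r - 1), ∑ c,
            (g i c - (∑ j ∈ Icc (l - 1) (r - 1), g j c) / ((r - l + 1 : ℕ) : ℝ)) ^ 2 =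
        pottsValVec C γ g (l - 1) + γ + segErr g (Ico (l - 1) r) := fun l hl => by
    rw [segErr_Ico_sub_one g (mem_Icc.mp hl).1 (mem_Icc.mp hl).2]
  rw [inf'_congr _ rfl hsegment]
  refine le_antisymm (le_inf' _ _ fun l hl => ?_) ?_
  · exact pottsValVec_le_add_segErr hγ.le g (by have := mem_Icc.mp hl; omega)
  · rw [pottsValVec_eq_iInf]
    refine le_ciInf fun u => ?_
    obtain ⟨k, hkr, hk⟩ := exists_add_segErr_le_cost hγ.le g u hr
    exact (inf'_le _ (mem_Icc.mpr ⟨Nat.le_add_left 1 k, hkr⟩)).trans hk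
end
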